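/- Let q be a positive integer and r = (r₁,…,r_{q−1}) ∈ ℕ₀^{q−1} with r₁ = max r. If q ∤ ‖r‖ and max r ≤ |r|_q, then there exists a q'-cumulative composition in 𝒲^{(q)}_r, i.e., 𝒲^{(q)}_r ≠ ∅. -/

import Mathlib

open Finset

/-- A composition: a list of positive natural numbers. -/
def IsComposition (δ : List ℕ) : Prop := ∀ x ∈ δ, 0 < x

/-- `δ` is `q'`-cumulative: no partial sum of `δ` (including the total sum, so
that the empty composition is excluded) is divisible by `q`. -/
def QCum (q : ℕ) (δ : List ℕ) : Prop :=
  ¬ q ∣ δ.sum ∧ ∀ j, 1 ≤ j → j ≤ δ.length → ¬ q ∣ (δ.take j).sum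

/-- The partition `((q-1)^{r (q-1)}, …, 2^{r 2}, 1^{r 1})` as a multiset. -/
def muOf (q : ℕ) (r : ℕ → ℕ) : Multiset ℕ :=
  ∑ i ∈ Finset.Ico 1 q, Multiset.replicate (r i) i

/-- `𝒲^{(q)}_r`: the set of `q'`-cumulative compositions which rearrange to the
partition `((q-1)^{r (q-1)}, …, 2^{r 2}, 1^{r 1})`. -/
def W (q : ℕ) (r : ℕ → ℕ) : Set (List ℕ) :=
  {δ | (↑δ : Multiset ℕ) = muOf q r ∧ QCum q δ}

/-- `r_j(λ)`: the number of parts `i ≥ 1` of `λ` with `i ≡ j (mod q)`. -/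
def rres (q : ℕ) (lam : Multiset ℕ) (j : ℕ) : ℕ :=
  Multiset.card (lam.filter fun i => 1 ≤ i ∧ i % q = j)

/-- `c^{(q)}_λ`: the number of `q'`-cumulative compositions rearranging to `λ`. -/
noncomputable def cnum (q : ℕ) (lam : Multiset ℕ) : ℕ :=
  Nat.card {δ : List ℕ // (↑δ : Multiset ℕ) = lam ∧ QCum q δ}

/-- `‖r‖ = ∑_{i=1}^{q-1} i·r_i`. -/
def normk (q : ℕ) (r : ℕ → ℕ) : ℕ := ∑ i ∈ Finset.Ico 1 q, i * r i

/-- `|r|_q = (q-1) + ∑_{i=2}^{q-1} (q-i)·r_i`. -/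
def absq (q : ℕ) (r : ℕ → ℕ) : ℕ := (q - 1) + ∑ i ∈ Finset.Ico 2 q, (q - i) * r i

/-- `max r = max{r_1, …, r_{q-1}}`. -/
def maxr (q : ℕ) (r : ℕ → ℕ) : ℕ := (Finset.Ico 1 q).sup r

/-! Build the composition greedily, keeping the current partial sum `s` modulo `q` and the
multiset `M` of parts still to be placed. Ones never cross a multiple of `q`, so each multiple
of `q` still ahead must be jumped over by a part `≥ 2`. The invariant `Admissible q s M` says
that enough such parts remain, `s + ∑ M < q (#{parts ≥ 2} + 1)`, and that each part `v ≥ 2` occurs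
at most once more often than `1`; the latter rules out being stuck with nothing but copies
of `q - s`. From every admissible state some part (or, in one configuration, the pair
`1, q - s`) can be placed without hitting a multiple of `q` while staying admissible, and the
hypotheses `r₁ = max r` and `max r ≤ |r|_q` make the initial state admissible. -/

namespace Multiset

theorem count_le_countP {α : Type*} [DecidableEq α] {p : α → Prop} [DecidablePred p] {a : α}
    (ha : p a) (M : Multiset α) : M.count a ≤ M.countP p := by
  induction M using Multiset.induction_on with
  | empty => simp
  | cons x M ih =>
    rw [count_cons, countP_cons]
    split_ifs <;> simp_all; omega

theorem sum_add_countP_le {q : ℕ} {M : Multiset ℕ} (hM : ∀ x ∈ M, x < q) :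
    M.sum + M.countP (2 ≤ ·) ≤ M.count 1 + q * M.countP (2 ≤ ·) := by
  induction M using Multiset.induction_on with
  | empty => simp
  | cons x M ih =>
    have hx := hM x (mem_cons_self x M)
    have := ih fun y hy => hM y (mem_cons_of_mem hy)
    rw [sum_cons, countP_cons, count_cons]
    split_ifs <;> simp only [mul_add] at * <;> omega

theorem count_one_erase_le_countP {M : Multiset ℕ} {w x : ℕ} (hw2 : 2 ≤ w)
    (hw : M.count 1 < M.count w) (hx1 : x ≠ 1) :
    (M.erase x).count 1 ≤ (M.erase x).countP (2 ≤ ·) := by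
  have hle := count_le_countP (p := (2 ≤ ·)) hw2 (M.erase x)
  have herase : M.count w ≤ (M.erase x).count w + 1 := by
    rcases eq_or_ne w x with rfl | hwx
    · rw [count_erase_self]; omega
    · rw [count_erase_of_ne hwx]; omega
  rw [count_erase_of_ne (Ne.symm hx1)]
  omega

end Multiset

def AvoidsMultiples (q : ℕ) : ℕ → List ℕ → Prop
  | _, [] => True
  | t, v :: δ => ¬ q ∣ t + v ∧ AvoidsMultiples q (t + v) δ

namespace AvoidsMultiples

variable {q t : ℕ} {δ : List ℕ}

theorem append_iff {L : List ℕ} :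
    AvoidsMultiples q t (L ++ δ) ↔ AvoidsMultiples q t L ∧ AvoidsMultiples q (t + L.sum) δ := by
  induction L generalizing t with
  | nil => simp [AvoidsMultiples]
  | cons v L ih => simp [AvoidsMultiples, ih, add_assoc, and_assoc]

theorem mod_iff : AvoidsMultiples q (t % q) δ ↔ AvoidsMultiples q t δ := by
  induction δ generalizing t with
  | nil => simp [AvoidsMultiples]
  | cons v δ ih =>
    have hdvd : q ∣ t % q + v ↔ q ∣ t + v := by
      simp only [Nat.dvd_iff_mod_eq_zero, Nat.mod_add_mod]
    have hrest : AvoidsMultiples q (t % q + v) δ ↔ AvoidsMultiples q (t + v) δ := by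
      rw [← ih, Nat.mod_add_mod, ih]
    simp only [AvoidsMultiples, hdvd, hrest]

theorem iff_take :
    AvoidsMultiples q t δ ↔ ∀ j, 1 ≤ j → j ≤ δ.length → ¬ q ∣ t + (δ.take j).sum := by
  induction δ generalizing t with
  | nil => simp [AvoidsMultiples]; omega
  | cons v δ ih =>
    simp only [AvoidsMultiples, ih, List.length_cons]
    constructor
    · rintro ⟨hv, hδ⟩ (_ | _ | j) hj1 hj
      · omega
      · simpa using hv
      · simpa [add_assoc] using hδ (j + 1) (by omega) (by omega)
    · intro h
      refine ⟨by simpa using h 1 le_rfl (by omega), fun j hj1 hj => ?_⟩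
      simpa [add_assoc] using h (j + 1) (by omega) (by omega)

end AvoidsMultiples

def Admissible (q s : ℕ) (M : Multiset ℕ) : Prop :=
  s + M.sum < q * (M.countP (2 ≤ ·) + 1) ∧ ∀ v, 2 ≤ v → M.count v ≤ M.count 1 + 1

namespace Admissible

variable {q s v w : ℕ} {M : Multiset ℕ}

theorem of_jump_over (h : Admissible q s (v ::ₘ M)) (hs : s < q) (hv : v < q)
    (hover : q < s + v) : AvoidsMultiples q s [v] ∧ Admissible q ((s + v) % q) M := by
  obtain ⟨hsum, hcount⟩ := h
  have hmod : (s + v) % q + q = s + v := by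
    rw [Nat.mod_eq_sub_mod hover.le, Nat.mod_eq_of_lt (by omega)]
    omega
  refine ⟨⟨fun hd => ?_, trivial⟩, ?_, fun u hu => ?_⟩
  · exact Nat.not_dvd_of_pos_of_lt (by omega) (by omega) (Nat.dvd_sub hd dvd_rfl)
  · simp only [Multiset.sum_cons, Multiset.countP_cons, if_pos (show 2 ≤ v by omega),
      mul_add] at hsum ⊢
    omega
  · have := hcount u hu
    simp only [Multiset.count_cons, if_neg (show 1 ≠ v by omega)] at this
    split_ifs at this <;> omega

theorem of_short_jump (h : Admissible q s (v ::ₘ M)) (hv : 2 ≤ v) (hshort : s + v < q)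
    (hM : ∀ x ∈ M, x < q) (hones : M.count 1 ≤ M.countP (2 ≤ ·)) :
    AvoidsMultiples q s [v] ∧ Admissible q ((s + v) % q) M := by
  -- the move costs one `q` of slack; pairing each `1` with a part `≥ 2` (at most `q - 1`) pays it
  have hsum := Multiset.sum_add_countP_le hM
  rw [Nat.mod_eq_of_lt hshort]
  refine ⟨⟨Nat.not_dvd_of_pos_of_lt (by omega) hshort, trivial⟩, ?_, fun u hu => ?_⟩
  · simp only [mul_add] at hsum ⊢
    omega
  · have := h.2 u hu
    simp only [Multiset.count_cons, if_neg (show 1 ≠ v by omega)] at this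
    split_ifs at this <;> omega

theorem of_one (h : Admissible q s (1 ::ₘ M)) (hs : s + 1 < q)
    (hcount : ∀ u, 2 ≤ u → (1 ::ₘ M).count u ≤ (1 ::ₘ M).count 1) :
    AvoidsMultiples q s [1] ∧ Admissible q ((s + 1) % q) M := by
  rw [Nat.mod_eq_of_lt hs]
  refine ⟨⟨Nat.not_dvd_of_pos_of_lt (by omega) hs, trivial⟩, ?_, fun u hu => ?_⟩
  · simpa [Multiset.countP_cons, add_assoc, add_comm 1] using h.1
  · simpa [Multiset.count_cons, show u ≠ 1 by omega] using hcount u hu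

theorem of_one_then_jump (hs : s + 1 < q) (hw : s + w = q) (hwq : w < q)
    (hM : ∀ x ∈ M, x = 1 ∨ x = w) (hcount : M.count w = M.count 1 + 1) :
    AvoidsMultiples q s [1, w] ∧ Admissible q ((s + 1 + w) % q) M := by
  have hbig : M.countP (2 ≤ ·) = M.count w :=
    Multiset.countP_congr rfl fun x hx => propext <| by
      rcases hM x hx with rfl | rfl <;> constructor <;> intro <;> omega
  have hsum := Multiset.sum_add_countP_le (q := q) fun x hx => by
    rcases hM x hx with rfl | rfl <;> omega
  have hmod : (s + 1 + w) % q = 1 := by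
    rw [show s + 1 + w = 1 + q by omega, Nat.add_mod_right, Nat.mod_eq_of_lt (by omega)]
  refine ⟨⟨Nat.not_dvd_of_pos_of_lt (by omega) hs, ?_, trivial⟩, ?_, fun u hu => ?_⟩
  · rw [show s + 1 + w = q + 1 by omega, Nat.dvd_add_right dvd_rfl, Nat.dvd_one]
    omega
  · rw [hmod, hbig, hcount] at *
    simp only [mul_add] at hsum ⊢
    omega
  · rcases eq_or_ne u w with rfl | huw
    · omega
    · rw [Multiset.count_eq_zero.mpr fun hu' => by rcases hM u hu' with rfl | rfl <;> omega]
      omega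

theorem exists_ne_of_count_one_eq_zero (hM : ∀ x ∈ M, 0 < x) (hndvd : ¬ q ∣ s + M.sum)
    (h : Admissible q s M) (hne : M ≠ 0) (hones : M.count 1 = 0) : ∃ v ∈ M, s + v ≠ q := by
  by_contra! hall
  obtain ⟨x, hx⟩ := Multiset.exists_mem_of_ne_zero hne
  have hrep : M = Multiset.replicate (Multiset.card M) x :=
    Multiset.eq_replicate_card.mpr fun y hy => by have := hall y hy; have := hall x hx; omega
  have hx2 : 2 ≤ x := by
    have := hM x hx
    have : x ≠ 1 := by rintro rfl; exact (Multiset.count_ne_zero.mpr hx) hones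
    omega
  have hcard : Multiset.card M = 1 := by
    have := h.2 x hx2
    rw [hrep, Multiset.count_replicate_self, Multiset.count_replicate, if_neg (by omega)] at this
    have := Multiset.card_pos.mpr hne
    omega
  rw [hrep, hcard, Multiset.replicate_one, Multiset.sum_singleton, hall x hx] at hndvd
  exact hndvd dvd_rfl

theorem add_one_lt (h : Admissible q s M) (hover : ∀ v ∈ M, s + v ≤ q) (h1 : 1 ∈ M) :
    s + 1 < q := by
  by_contra! hs1
  have hbig : M.countP (2 ≤ ·) = 0 :=
    Multiset.countP_eq_zero.mpr fun x hx hx2 => by have := hover x hx; omega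
  have := Multiset.le_sum_of_mem h1
  have := h.1
  rw [hbig] at this
  omega

theorem exists_step_of_jumps_land (hM : ∀ x ∈ M, 0 < x ∧ x < q) (hndvd : ¬ q ∣ s + M.sum)
    (h : Admissible q s M) (hne : M ≠ 0) (hover : ∀ v ∈ M, s + v ≤ q)
    (hland : ∀ v ∈ M, 2 ≤ v → (M.erase v).count 1 ≤ (M.erase v).countP (2 ≤ ·) → s + v = q) :
    ∃ L M', L ≠ [] ∧ M = ↑L + M' ∧ AvoidsMultiples q s L ∧
      Admissible q ((s + L.sum) % q) M' := by
  have hones : 0 < M.count 1 := by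
    by_contra! h0
    obtain ⟨v, hv, hvq⟩ :=
      exists_ne_of_count_one_eq_zero (fun x hx => (hM x hx).1) hndvd h hne (by omega)
    have hv1 : v ≠ 1 := by rintro rfl; exact Multiset.count_ne_zero.mpr hv (by omega)
    refine hvq (hland v hv (by have := (hM v hv).1; omega) ?_)
    rw [Multiset.count_erase_of_ne (Ne.symm hv1)]
    omega
  have hs1 := h.add_one_lt hover (Multiset.count_pos.mp hones)
  obtain ⟨M', rfl⟩ := Multiset.exists_cons_of_mem (Multiset.count_pos.mp hones)
  by_cases hcount : ∀ u, 2 ≤ u → (1 ::ₘ M').count u ≤ (1 ::ₘ M').count 1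
  · exact ⟨[1], M', by simp, by simp, by simpa using h.of_one hs1 hcount⟩
  push Not at hcount
  obtain ⟨w, hw2, hw⟩ := hcount
  have hw' : M'.count w = M'.count 1 + 2 := by
    have := h.2 w hw2
    simp only [Multiset.count_cons_self, Multiset.count_cons_of_ne (show w ≠ 1 by omega)]
      at hw this
    omega
  have hall : ∀ x ∈ M', x = 1 ∨ s + x = q := by
    intro x hx
    rcases eq_or_ne x 1 with rfl | hx1
    · exact Or.inl rfl
    have hxM : x ∈ 1 ::ₘ M' := Multiset.mem_cons_of_mem hx
    exact Or.inr (hland x hxM (by have := (hM x hxM).1; omega)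
      (Multiset.count_one_erase_le_countP hw2 hw hx1))
  have hwM' : w ∈ M' := Multiset.count_pos.mp (by omega)
  have hsw : s + w = q := (hall w hwM').resolve_left (by omega)
  obtain ⟨M'', rfl⟩ := Multiset.exists_cons_of_mem hwM'
  have hrest := of_one_then_jump hs1 hsw (hM w (by simp)).2
    (fun x hx => (hall x (Multiset.mem_cons_of_mem hx)).imp_right (by omega))
    (by simp only [Multiset.count_cons_self,
      Multiset.count_cons_of_ne (show 1 ≠ w by omega)] at hw'; omega)
  exact ⟨[1, w], M'', by simp, by simp [← Multiset.cons_coe], by simpa [add_assoc] using hrest⟩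

theorem exists_step (hs : s < q) (hM : ∀ x ∈ M, 0 < x ∧ x < q) (hndvd : ¬ q ∣ s + M.sum)
    (h : Admissible q s M) (hne : M ≠ 0) :
    ∃ L M', L ≠ [] ∧ M = ↑L + M' ∧ AvoidsMultiples q s L ∧
      Admissible q ((s + L.sum) % q) M' := by
  by_cases hover : ∃ v ∈ M, q < s + v
  · obtain ⟨v, hv, hover⟩ := hover
    obtain ⟨M', rfl⟩ := Multiset.exists_cons_of_mem hv
    exact ⟨[v], M', by simp, by simp, by simpa using h.of_jump_over hs (hM v hv).2 hover⟩
  by_cases hshort : ∃ v ∈ M, 2 ≤ v ∧ s + v < q ∧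
      (M.erase v).count 1 ≤ (M.erase v).countP (2 ≤ ·)
  · obtain ⟨v, hv, hv2, hshort, hones⟩ := hshort
    obtain ⟨M', rfl⟩ := Multiset.exists_cons_of_mem hv
    rw [Multiset.erase_cons_head] at hones
    exact ⟨[v], M', by simp, by simp, by simpa using
      (h.of_short_jump hv2 hshort (fun x hx => (hM x (Multiset.mem_cons_of_mem hx)).2) hones)⟩
  push Not at hover hshort
  exact exists_step_of_jumps_land hM hndvd h hne hover fun v hv hv2 hones =>
    le_antisymm (hover v hv) (not_lt.mp fun hlt => (hshort v hv hv2 hlt).not_ge hones)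

theorem exists_avoidsMultiples (hs : s < q) (hM : ∀ x ∈ M, 0 < x ∧ x < q)
    (hndvd : ¬ q ∣ s + M.sum) (h : Admissible q s M) :
    ∃ δ : List ℕ, (δ : Multiset ℕ) = M ∧ AvoidsMultiples q s δ := by
  induction hn : Multiset.card M using Nat.strong_induction_on generalizing M s with
  | _ n ih =>
  rcases eq_or_ne M 0 with rfl | hne
  · exact ⟨[], rfl, trivial⟩
  obtain ⟨L, M', hL, rfl, hLav, hM'⟩ := h.exists_step hs hM hndvd hne
  have hndvd' : ¬ q ∣ (s + L.sum) % q + M'.sum := by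
    rwa [Nat.dvd_iff_mod_eq_zero, Nat.mod_add_mod, ← Nat.dvd_iff_mod_eq_zero, add_assoc,
      ← Multiset.sum_coe, ← Multiset.sum_add]
  obtain ⟨δ, rfl, hδ⟩ := ih _ (by simp [← hn, List.length_pos_of_ne_nil hL])
    (Nat.mod_lt _ (by omega)) (fun x hx => hM x (Multiset.mem_add.mpr (Or.inr hx))) hndvd' hM' rfl
  exact ⟨L ++ δ, by simp, AvoidsMultiples.append_iff.mpr ⟨hLav, AvoidsMultiples.mod_iff.mp hδ⟩⟩

end Admissible

section muOf

variable {q : ℕ} {r : ℕ → ℕ}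

theorem mem_muOf {x : ℕ} (hx : x ∈ muOf q r) : 0 < x ∧ x < q := by
  obtain ⟨i, hi, hxi⟩ := Multiset.mem_sum.mp hx
  rw [Multiset.eq_of_mem_replicate hxi]
  have := Finset.mem_Ico.mp hi
  omega

theorem sum_muOf : (muOf q r).sum = normk q r := by
  simp [muOf, normk, Multiset.sum_sum, mul_comm]

theorem count_muOf (v : ℕ) : (muOf q r).count v = if v ∈ Finset.Ico 1 q then r v else 0 := by
  simp only [muOf, Multiset.count_sum', Multiset.count_replicate, Finset.sum_ite_eq']

theorem countP_two_le_muOf (hq : 2 ≤ q) :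
    (muOf q r).countP (2 ≤ ·) = ∑ i ∈ Finset.Ico 2 q, r i := by
  rw [muOf, ← Multiset.coe_countPAddMonoidHom, map_sum,
    Finset.sum_eq_sum_Ico_succ_bot (by omega : 1 < q)]
  have hones : (Multiset.replicate (r 1) 1).countP (2 ≤ ·) = 0 :=
    Multiset.countP_eq_zero.mpr fun x hx => by rw [Multiset.eq_of_mem_replicate hx]; omega
  simp only [Multiset.coe_countPAddMonoidHom, hones, zero_add]
  refine Finset.sum_congr rfl fun i hi => ?_
  rw [Multiset.countP_eq_card.mpr, Multiset.card_replicate]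
  intro x hx
  rw [Multiset.eq_of_mem_replicate hx]
  exact (Finset.mem_Ico.mp hi).1

theorem normk_lt_of_le_absq (hq : 2 ≤ q) (hle : r 1 ≤ absq q r) :
    normk q r < q * (∑ i ∈ Finset.Ico 2 q, r i + 1) := by
  have hsplit : normk q r = r 1 + ∑ i ∈ Finset.Ico 2 q, i * r i := by
    rw [normk, Finset.sum_eq_sum_Ico_succ_bot (by omega : 1 < q), one_mul]
  have hcomplement : ∑ i ∈ Finset.Ico 2 q, (q - i) * r i + ∑ i ∈ Finset.Ico 2 q, i * r i =
      q * ∑ i ∈ Finset.Ico 2 q, r i := by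
    rw [← Finset.sum_add_distrib, Finset.mul_sum]
    refine Finset.sum_congr rfl fun i hi => ?_
    rw [← add_mul, Nat.sub_add_cancel (Finset.mem_Ico.mp hi).2.le]
  rw [absq] at hle
  rw [mul_add, mul_one]
  omega

theorem admissible_muOf (hq : 2 ≤ q) (hmax : ∀ i ∈ Finset.Ico 1 q, r i ≤ r 1)
    (hle : r 1 ≤ absq q r) : Admissible q 0 (muOf q r) := by
  refine ⟨?_, fun v hv => ?_⟩
  · rw [zero_add, sum_muOf, countP_two_le_muOf hq]
    exact normk_lt_of_le_absq hq hle
  · rw [count_muOf, count_muOf, if_pos (Finset.mem_Ico.mpr ⟨le_rfl, by omega⟩)]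
    split_ifs with hv
    · exact (hmax v hv).trans (Nat.le_succ _)
    · exact Nat.zero_le _

end muOf

theorem stmt9_general (q : ℕ) (r : ℕ → ℕ) (hr : r 1 = maxr q r)
    (hdvd : ¬ q ∣ normk q r) (hle : maxr q r ≤ absq q r) :
    (W q r).Nonempty := by
  have hq : 2 ≤ q := by
    rcases q with _ | _ | q
    · simp [normk] at hdvd
    · exact absurd (one_dvd _) hdvd
    · omega
  have hmax : ∀ i ∈ Finset.Ico 1 q, r i ≤ r 1 := fun i hi => hr ▸ Finset.le_sup hi
  obtain ⟨δ, hδ, hav⟩ := Admissible.exists_avoidsMultiples (by omega) (fun _ => mem_muOf)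
    (by rwa [zero_add, sum_muOf]) (admissible_muOf hq hmax (hr ▸ hle))
  refine ⟨δ, hδ, ?_, ?_⟩
  · rwa [← Multiset.sum_coe, hδ, sum_muOf]
  · simpa using AvoidsMultiples.iff_take.mp hav

/-- Lemma 1, converse direction: if `r₁ = max r`, `q ∤ ‖r‖` and
`max r ≤ |r|_q`, then `𝒲^{(q)}_r ≠ ∅`. -/
theorem stmt9 (q : ℕ) (hq : 0 < q) (r : ℕ → ℕ) (hr : r 1 = maxr q r)
    (hdvd : ¬ q ∣ normk q r) (hle : maxr q r ≤ absq q r) :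
    (W q r).Nonempty :=
  stmt9_general q r hr hdvd hle
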